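/- If (x,y) ∈ ℂ² is a common zero of f₁, ∂f₁/∂x, and ∂f₁/∂y (i.e., a singular point of the affine quartic f₁ = 0), then x³ - 3x + 1 = 0, where f₁(x,y) = F(x,y,1,1). -/
import Mathlib


open MvPolynomial

/-- The Kenyon–Smillie quartic `G` in `ℂ[X,Y,Z]`. -/
noncomputable def G : MvPolynomial (Fin 3) ℂ :=
  X 0 ^ 4 - 3 * X 0 ^ 3 * X 1 + 6 * X 0 ^ 3 * X 2 - 3 * X 0 ^ 2 * X 1 ^ 2
    - 6 * X 0 ^ 2 * X 1 * X 2 + 6 * X 0 ^ 2 * X 2 ^ 2 + 4 * X 0 * X 1 ^ 3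
    - 6 * X 0 * X 1 ^ 2 * X 2 - 6 * X 0 * X 1 * X 2 ^ 2 + X 0 * X 2 ^ 3
    + 3 * X 1 ^ 4 + 3 * X 1 ^ 3 * X 2

/-- `f₁(x,y) = F(x,y,1,1) = x^4 + G(x,y,1)`, the dehomogenized fiber over `t = 1`. -/
noncomputable def f₁ : MvPolynomial (Fin 2) ℂ :=
  aeval ![X 0, X 1, 1] (X 0 ^ 4 + G)

lemma f₁_eq : f₁ = C 2 * X 0 ^ 4 - C 3 * X 0 ^ 3 * X 1 + C 6 * X 0 ^ 3
    - C 3 * X 0 ^ 2 * X 1 ^ 2 - C 6 * X 0 ^ 2 * X 1 + C 6 * X 0 ^ 2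
    + C 4 * X 0 * X 1 ^ 3 - C 6 * X 0 * X 1 ^ 2 - C 6 * X 0 * X 1 + X 0
    + C 3 * X 1 ^ 4 + C 3 * X 1 ^ 3 := by
  simp only [f₁, G, map_add, map_sub, map_mul, map_pow, map_ofNat, map_one, aeval_X,
    Matrix.cons_val_zero, Matrix.cons_val_one, Matrix.head_cons, Matrix.cons_val_two,
    Matrix.tail_cons, one_pow, mul_one]
  ring_nf

theorem singular_points_satisfy_cubic (x y : ℂ)
    (h0 : eval ![x, y] f₁ = 0)
    (hx : eval ![x, y] (pderiv 0 f₁) = 0)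
    (hy : eval ![x, y] (pderiv 1 f₁) = 0) :
    x ^ 3 - 3 * x + 1 = 0 := by
  rw [f₁_eq] at h0 hx hy
  simp only [pderiv_mul, pderiv_C, pderiv_X_self, pderiv_X_of_ne, pderiv_pow, map_add, map_sub,
    map_mul, map_pow, eval_C, eval_X, eval_add, eval_sub, eval_mul, eval_pow,
    Matrix.cons_val_zero, Matrix.cons_val_one, Matrix.head_cons] at h0 hx hy
  simp at h0 hx hy
  linear_combination
    (2435/81 + 3557/243*y - 30766/243*y^2 - 23704/243*y^3 + 14354/243*x + 12071/243*x*y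
      - 18268/243*x*y^2 + 680/27*x^2) * h0 +
    (1 + 6*y + 1/9*y^2 + 142/27*y^3 - 1388/81*x - 4937/243*x*y + 11584/243*x*y^2
      + 5926/243*x*y^3 - 4736/243*x^2 - 2444/243*x^2*y + 4567/243*x^2*y^2 - 170/27*x^3) * hx +
    (377/81 - 3203/243*y + 872/243*y^2 + 8747/243*y^3 + 5926/243*y^4 + 178/243*x
      - 7582/243*x*y - 6553/243*x*y^2 + 4567/243*x*y^3) * hy
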